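/- arXiv:2101.10820 — 8 statements merged into one kernel-verified Lean document; each statement's English description precedes it below -/
import Mathlib

section
/- For tensors A : Fin p → Matrix (Fin m) (Fin s) ℝ and B : Fin p → Matrix (Fin s) (Fin n) ℝ, the matrix product bcirc(A) · bcirc(B) is again a block circulant matrix; explicitly, bcirc(A) · bcirc(B) = bcirc(C), where C : Fin p → Matrix (Fin m) (Fin n) ℝ is given by C k = ∑_{l ∈ Fin p} (A l) · (B (k − l)). (Thus the bcirc encoding turns the T-product of tensors into matrix multiplication.) -/
open Matrix

/-- The block circulant matrix of a third order tensor given by its frontal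
slices: `bcirc(A) (k,i) (l,j) = (A (k−l)) i j` with block indices in `ℤ/p`. -/
def bcirc {m n p : ℕ} (A : Fin p → Matrix (Fin m) (Fin n) ℝ) :
    Matrix (Fin p × Fin m) (Fin p × Fin n) ℝ :=
  Matrix.of fun ki lj => A (ki.1 - lj.1) ki.2 lj.2

/-- the product of two block circulant matrices is block
circulant: `bcirc(A) · bcirc(B) = bcirc(C)` with `C k = ∑ l, A l * B (k - l)`. -/
theorem bcirc_mul_bcirc (m s n p : ℕ) (hp : 1 ≤ p)
    (A : Fin p → Matrix (Fin m) (Fin s) ℝ) (B : Fin p → Matrix (Fin s) (Fin n) ℝ) :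
    bcirc A * bcirc B = bcirc (fun k => ∑ l : Fin p, A l * B (k - l)) := by
  have : NeZero p := ⟨by omega⟩
  ext ⟨k, i⟩ ⟨l, j⟩
  simp only [bcirc, Matrix.mul_apply, Matrix.of_apply, Matrix.sum_apply]
  rw [Fintype.sum_prod_type]
  refine Fintype.sum_equiv (Equiv.subLeft k) _ _ fun x => ?_
  refine Finset.sum_congr rfl fun t _ => ?_
  have h2 : k - l - Equiv.subLeft k x = x - l := by simp [Equiv.subLeft]
  simp [Equiv.subLeft, h2]
end

section
/- If A : Fin p → Matrix (Fin n) (Fin n) ℝ is such that the matrix bcirc(A) is invertible, then its inverse is again block circulant: there exists B : Fin p → Matrix (Fin n) (Fin n) ℝ with bcirc(A) · bcirc(B) = 1 and bcirc(B) · bcirc(A) = 1. -/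
open Matrix

/-- if `bcirc(A)` is invertible, its inverse is again the block
circulant matrix of some tensor `B`. -/
theorem bcirc_inverse_is_bcirc (n p : ℕ) (hp : 1 ≤ p)
    (A : Fin p → Matrix (Fin n) (Fin n) ℝ) (h : IsUnit (bcirc A)) :
    ∃ B : Fin p → Matrix (Fin n) (Fin n) ℝ,
      bcirc A * bcirc B = 1 ∧ bcirc B * bcirc A = 1 := by
  obtain ⟨q, rfl⟩ : ∃ q, p = q + 1 := ⟨p - 1, by omega⟩
  obtain ⟨M, h1, h2⟩ := isUnit_iff_exists.mp h
  have key : ∀ (t k l : Fin (q + 1)) (i j : Fin n),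
      M (k + t, i) (l + t, j) = M (k, i) (l, j) := by
    intro t
    set Mt : Matrix (Fin (q + 1) × Fin n) (Fin (q + 1) × Fin n) ℝ :=
      Matrix.of fun ki lj => M (ki.1 + t, ki.2) (lj.1 + t, lj.2) with hMt
    have hright : bcirc A * Mt = 1 := by
      ext ⟨k, i⟩ ⟨l, j⟩
      have hentry := congrFun (congrFun h1 (k + t, i)) (l + t, j)
      have hsum : (bcirc A * Mt) (k, i) (l, j)
          = (bcirc A * M) (k + t, i) (l + t, j) := by
        simp only [Matrix.mul_apply, bcirc, Matrix.of_apply, hMt,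
          Fintype.sum_prod_type]
        refine Fintype.sum_equiv (Equiv.addRight t) _ _ fun m => ?_
        simp [add_sub_add_right_eq_sub]
      rw [hsum, hentry]
      simp only [Matrix.one_apply, Prod.mk.injEq]
      congr 1
      simp [add_left_inj]
    have hMtM : Mt = M := by
      calc Mt = 1 * Mt := (one_mul _).symm
        _ = (M * bcirc A) * Mt := by rw [h2]
        _ = M * (bcirc A * Mt) := by rw [mul_assoc]
        _ = M := by rw [hright, mul_one]
    intro k l i j
    have := congrFun (congrFun hMtM (k, i)) (l, j)
    simpa [hMt] using this
  refine ⟨fun k => Matrix.of fun i j => M (k, i) (0, j), ?_, ?_⟩ <;>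
  · have hB : bcirc (fun k => Matrix.of fun i j => M (k, i) ((0 : Fin (q+1)), j)) = M := by
      ext ⟨k, i⟩ ⟨l, j⟩
      simp only [bcirc, Matrix.of_apply]
      have := key l (k - l) 0 i j
      simpa [sub_add_cancel, zero_add] using this.symm
    rw [hB]
    first | exact h1 | exact h2
end

section
/- Let A : Fin p → Matrix (Fin n) (Fin n) ℝ be a T-symmetric tensor (bcirc(A) symmetric). Then there exist tensors U, D : Fin p → Matrix (Fin n) (Fin n) ℝ such that bcirc(U) is an orthogonal matrix, every slice D k is a diagonal matrix, bcirc(D) is symmetric, and bcirc(A) = bcirc(U) · bcirc(D) · (bcirc U)ᵀ. (T-eigen-decomposition of a T-symmetric tensor.) -/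
/-! `bcirc` turns the t-product `tMul` of tensors into matrix multiplication, `tOne` into `1` and
`tConjTranspose` into transposition, so the theorem is a statement about the algebra of tensors.
Over `ℂ`, the discrete Fourier transform in the tube index turns the t-product into slice-wise
matrix multiplication and `tConjTranspose` into slice-wise conjugate transposition. The Fourier
slices `Â k` of a T-symmetric real tensor are Hermitian with `Â (-k) = conj (Â k)`. Diagonalise
them as `Â k = V k Λ k (V k)ᴴ` by unitaries chosen with the same symmetry `V (-k) = conj (V k)`
(real orthogonal ones on the self-conjugate slices `k = -k`). That symmetry makes the inverse
transforms `U` of `V` and `D` of `Λ` real, and the required identities between t-products hold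
because they hold slice-wise after the transform. -/

open Matrix

open ComplexConjugate

section TProduct

variable {G R S l m n : Type*} [AddCommGroup G]

def tMul [Fintype G] [Fintype m] [Mul R] [AddCommMonoid R] (X : G → Matrix l m R)
    (Y : G → Matrix m n R) : G → Matrix l n R :=
  fun k => ∑ j, X (k - j) * Y j

def tOne [DecidableEq G] [DecidableEq n] [Zero R] [One R] : G → Matrix n n R :=
  fun k => if k = 0 then 1 else 0

def tConjTranspose [Star R] (X : G → Matrix m n R) : G → Matrix n m R :=
  fun k => (X (-k))ᴴ

variable [Semiring R] [Semiring S] (f : R →+* S)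

theorem tMul_map [Fintype G] [Fintype m] (X : G → Matrix l m R) (Y : G → Matrix m n R) :
    tMul (fun k => (X k).map f) (fun k => (Y k).map f) = fun k => (tMul X Y k).map f := by
  ext k i j
  simp [tMul, Matrix.sum_apply, ← Matrix.map_mul]

theorem tOne_map [DecidableEq G] [DecidableEq n] :
    (tOne : G → Matrix n n S) = fun k => (tOne k : Matrix n n R).map f := by
  ext k : 1
  by_cases hk : k = 0 <;> simp [tOne, hk, Matrix.map_one f f.map_zero f.map_one]

theorem tConjTranspose_map [Star R] [Star S] (hf : ∀ x, f (star x) = star (f x))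
    (X : G → Matrix m n R) :
    tConjTranspose (fun k => (X k).map f) = fun k => (tConjTranspose X k).map f := by
  ext k : 1
  exact (conjTranspose_map f hf).symm

end TProduct

section BlockCirculant

variable {p l m n : ℕ} [NeZero p]

theorem bcirc_tMul (X : Fin p → Matrix (Fin l) (Fin m) ℝ) (Y : Fin p → Matrix (Fin m) (Fin n) ℝ) :
    bcirc (tMul X Y) = bcirc X * bcirc Y := by
  ext ⟨k, i⟩ ⟨k', j⟩
  simp only [bcirc, tMul, of_apply, mul_apply, Matrix.sum_apply, Fintype.sum_prod_type]
  exact Fintype.sum_equiv (Equiv.addRight k') _ _ fun b => by simp [sub_sub, add_comm]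

theorem bcirc_tOne : bcirc (tOne : Fin p → Matrix (Fin n) (Fin n) ℝ) = 1 := by
  ext ⟨k, i⟩ ⟨k', j⟩
  by_cases h : k = k' <;> simp [bcirc, tOne, one_apply, sub_eq_zero, h]

theorem bcirc_tConjTranspose (X : Fin p → Matrix (Fin m) (Fin n) ℝ) :
    bcirc (tConjTranspose X) = (bcirc X)ᵀ := by
  ext ⟨k, i⟩ ⟨k', j⟩
  simp [bcirc, tConjTranspose]

theorem bcirc_injective :
    Function.Injective (bcirc : (Fin p → Matrix (Fin m) (Fin n) ℝ) → _) := by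
  intro X Y h
  ext k i j
  simpa [bcirc] using congr_fun₂ h (k, i) (0, j)

end BlockCirculant

section Fourier

open ZMod

variable {N : ℕ} [NeZero N] {l m n : Type*}

theorem dft_tMul [Fintype m] (X : ZMod N → Matrix l m ℂ) (Y : ZMod N → Matrix m n ℂ)
    (k : ZMod N) : 𝓕 (tMul X Y) k = 𝓕 X k * 𝓕 Y k := by
  simp only [dft_apply, tMul, Finset.smul_sum, Matrix.sum_mul, Matrix.mul_sum, Matrix.smul_mul,
    Matrix.mul_smul, smul_smul]
  rw [Finset.sum_comm]
  refine Fintype.sum_congr _ _ fun j => ?_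
  refine Fintype.sum_equiv (Equiv.subRight j) _ _ fun i => ?_
  rw [Equiv.subRight_apply, ← AddChar.map_add_eq_mul,
    show -(j * k) + -((i - j) * k) = -(i * k) by ring]

theorem dft_tOne [DecidableEq n] (k : ZMod N) : 𝓕 (tOne : ZMod N → Matrix n n ℂ) k = 1 := by
  simp [dft_apply, tOne]

theorem dft_tConjTranspose (X : ZMod N → Matrix m n ℂ) (k : ZMod N) :
    𝓕 (tConjTranspose X) k = (𝓕 X k)ᴴ := by
  unfold tConjTranspose
  rw [dft_comp_neg (fun j => (X j)ᴴ)]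
  simp [dft_apply, conjTranspose_sum, AddChar.map_neg_eq_conj]

theorem dft_map_conj (X : ZMod N → Matrix m n ℂ) (k : ZMod N) :
    𝓕 (fun j => (X j).map conj) k = (𝓕 X (-k)).map conj := by
  ext i i'
  simp [dft_apply, Matrix.sum_apply, AddChar.map_neg_eq_conj]

theorem dft_neg_of_map_conj_eq_self {X : ZMod N → Matrix m n ℂ}
    (hX : ∀ j, (X j).map conj = X j) (k : ZMod N) : 𝓕 X (-k) = (𝓕 X k).map conj := by
  rw [← neg_neg k, ← dft_map_conj, neg_neg]
  simp only [hX]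

theorem map_conj_invDFT_eq_self {V : ZMod N → Matrix m n ℂ}
    (hV : ∀ k, V (-k) = (V k).map conj) (j : ZMod N) : (𝓕⁻ V j).map conj = 𝓕⁻ V j := by
  have hconj : (fun k => (V k).map conj) = fun k => V (-k) := funext fun k => (hV k).symm
  have hreal : (𝓕 V (-j)).map conj = 𝓕 V (-j) := by
    rw [← dft_map_conj, hconj, dft_comp_neg]
  rw [invDFT_apply']
  conv_rhs => rw [← hreal]
  ext a b
  simp

theorem isDiag_invDFT {Φ : ZMod N → Matrix n n ℂ} (hΦ : ∀ k, (Φ k).IsDiag)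
    (j : ZMod N) : (𝓕⁻ Φ j).IsDiag := by
  intro a b hab
  simp [invDFT_apply, Matrix.sum_apply, hΦ _ hab]

end Fourier

theorem exists_map_ofReal_eq {G m n : Type*} {Z : G → Matrix m n ℂ}
    (hZ : ∀ k, (Z k).map conj = Z k) :
    ∃ X : G → Matrix m n ℝ, (fun k => (X k).map Complex.ofRealHom) = Z :=
  ⟨fun k => (Z k).map Complex.re, funext fun k => by
    ext i j
    exact Complex.conj_eq_iff_re.mp (congr_fun₂ (hZ k) i j)⟩

theorem exists_neg_equivariant_choice {G α : Type*} [InvolutiveNeg G] {σ : α → α}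
    (hσ : Function.Involutive σ) {P : G → α → Prop} (hP : ∀ k a, P k a → P (-k) (σ a))
    (hex : ∀ k, ∃ a, P k a ∧ (-k = k → σ a = a)) :
    ∃ f : G → α, ∀ k, P k (f k) ∧ f (-k) = σ (f k) := by
  let _ : LinearOrder G := IsWellOrder.linearOrder WellOrderingRel
  choose a ha hfix using hex
  refine ⟨fun k => if k ≤ -k then a k else σ (a (-k)), fun k => ⟨?_, ?_⟩⟩
  · dsimp only
    split_ifs
    · exact ha k
    · simpa using hP _ _ (ha (-k))
  · rcases lt_trichotomy k (-k) with h | h | h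
    · simp [h.le, not_le.mpr h]
    · simp [← h, hfix k h.symm]
    · simp [h.le, not_le.mpr h, hσ _]

section Spectral

variable {n : Type*} [Fintype n] [DecidableEq n]

theorem Matrix.IsHermitian.exists_unitary_diagonalization {𝕜 : Type*} [RCLike 𝕜]
    {H : Matrix n n 𝕜} (hH : H.IsHermitian) :
    ∃ V ∈ unitaryGroup n 𝕜, ∃ d : n → ℝ, H = V * diagonal (fun i => (d i : 𝕜)) * star V :=
  ⟨_, hH.eigenvectorUnitary.2, hH.eigenvalues, hH.spectral_theorem⟩

theorem Matrix.IsHermitian.exists_real_unitary_diagonalization {H : Matrix n n ℂ}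
    (hH : H.IsHermitian) (hreal : H.map conj = H) :
    ∃ V ∈ unitaryGroup n ℂ, V.map conj = V ∧
      ∃ d : n → ℝ, H = V * diagonal (fun i => (d i : ℂ)) * star V := by
  have hHR : H = (H.map Complex.re).map (↑) := by
    ext i j
    exact (Complex.conj_eq_iff_re.mp (congr_fun₂ hreal i j)).symm
  have hR : (H.map Complex.re).IsHermitian := by
    ext i j
    simpa using congr_arg Complex.re (congr_fun₂ hH j i).symm
  obtain ⟨W, hW, d, hWd⟩ := hR.exists_unitary_diagonalization
  have hstar : (star W).map ((↑) : ℝ → ℂ) = star (W.map (↑)) :=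
    conjTranspose_map _ fun x => (Complex.conj_ofReal x).symm
  have hmul (A B : Matrix n n ℝ) : (A * B).map ((↑) : ℝ → ℂ) = A.map (↑) * B.map (↑) :=
    Matrix.map_mul (f := Complex.ofRealHom)
  refine ⟨W.map (↑), ?_, ?_, d, ?_⟩
  · rw [mem_unitaryGroup_iff, ← hstar, ← hmul, mem_unitaryGroup_iff.mp hW]
    simp
  · ext i j
    simp
  · rw [hHR, hWd, hmul, hmul, hstar, diagonal_map (by simp)]
    rfl

theorem map_conj_unitary_diagonalization {H V : Matrix n n ℂ} {d : n → ℝ}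
    (hV : V ∈ unitaryGroup n ℂ) (hH : H = V * diagonal (fun i => (d i : ℂ)) * star V) :
    V.map conj ∈ unitaryGroup n ℂ ∧
      H.map conj = V.map conj * diagonal (fun i => (d i : ℂ)) * star (V.map conj) := by
  have hstar : (star V).map conj = star (V.map conj) :=
    conjTranspose_map _ fun x => rfl
  constructor
  · rw [mem_unitaryGroup_iff, ← hstar, ← Matrix.map_mul, mem_unitaryGroup_iff.mp hV]
    simp
  · rw [hH, ← hstar, Matrix.map_mul, Matrix.map_mul, diagonal_map (map_zero _)]
    simp

theorem exists_conj_symm_unitary_diagonalization {G : Type*} [InvolutiveNeg G]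
    {H : G → Matrix n n ℂ} (hH : ∀ k, (H k).IsHermitian) (hneg : ∀ k, H (-k) = (H k).map conj) :
    ∃ (V : G → Matrix n n ℂ) (d : G → n → ℝ), (∀ k, V k ∈ unitaryGroup n ℂ) ∧
      (∀ k, H k = V k * diagonal (fun i => (d k i : ℂ)) * star (V k)) ∧
      (∀ k, V (-k) = (V k).map conj) ∧ ∀ k, d (-k) = d k := by
  set P : G → Matrix n n ℂ × (n → ℝ) → Prop := fun k x =>
    x.1 ∈ unitaryGroup n ℂ ∧ H k = x.1 * diagonal (fun i => (x.2 i : ℂ)) * star x.1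
  have hex (k : G) : ∃ x, P k x ∧ (-k = k → (x.1.map conj, x.2) = x) := by
    by_cases hk : -k = k
    · obtain ⟨V, hV, hVreal, d, hVd⟩ :=
        (hH k).exists_real_unitary_diagonalization (by rw [← hneg, hk])
      exact ⟨(V, d), ⟨hV, hVd⟩, fun _ => by rw [hVreal]⟩
    · obtain ⟨V, hV, d, hVd⟩ := (hH k).exists_unitary_diagonalization
      exact ⟨(V, d), ⟨hV, hVd⟩, fun h => absurd h hk⟩
  obtain ⟨f, hf⟩ := exists_neg_equivariant_choice (fun x => by ext <;> simp)
    (fun k x hx => by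
      simp only [P, hneg]; exact map_conj_unitary_diagonalization hx.1 hx.2) hex
  refine ⟨fun k => (f k).1, fun k => (f k).2, fun k => (hf k).1.1, fun k => (hf k).1.2,
    fun k => by simp only [(hf k).2], fun k => by simp only [(hf k).2]⟩

end Spectral

section TEigendecomposition

open ZMod

variable {N : ℕ} [NeZero N] {n : Type*} [Fintype n] [DecidableEq n]

theorem exists_tEigendecomposition {A : ZMod N → Matrix n n ℝ} (hA : tConjTranspose A = A) :
    ∃ U D : ZMod N → Matrix n n ℝ,
      tMul U (tConjTranspose U) = tOne ∧ tMul (tConjTranspose U) U = tOne ∧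
      (∀ k, (D k).IsDiag) ∧ tConjTranspose D = D ∧ A = tMul (tMul U D) (tConjTranspose U) := by
  let c (X : ZMod N → Matrix n n ℝ) : ZMod N → Matrix n n ℂ :=
    fun k => (X k).map Complex.ofRealHom
  have hc_mul (X Y) : c (tMul X Y) = tMul (c X) (c Y) := (tMul_map _ X Y).symm
  have hc_star (X) : c (tConjTranspose X) = tConjTranspose (c X) :=
    (tConjTranspose_map _ (fun x => (Complex.conj_ofReal x).symm) X).symm
  have hc_one : c tOne = tOne := (tOne_map _).symm
  have hc_dft_inj {X Y} (h : 𝓕 (c X) = 𝓕 (c Y)) : X = Y :=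
    funext fun k => Matrix.map_injective Complex.ofReal_injective (congr_fun (dft.injective h) k)
  have hH (k) : (𝓕 (c A) k).IsHermitian := by
    rw [IsHermitian, ← dft_tConjTranspose, ← hc_star, hA]
  obtain ⟨V, d, hVunit, hAV, hVneg, hdneg⟩ := exists_conj_symm_unitary_diagonalization hH
    (dft_neg_of_map_conj_eq_self fun j => by ext; simp [c])
  set Λ : ZMod N → Matrix n n ℂ := fun k => diagonal (fun i => (d k i : ℂ))
  obtain ⟨U, hU⟩ := exists_map_ofReal_eq (map_conj_invDFT_eq_self hVneg)
  obtain ⟨D, hD⟩ := exists_map_ofReal_eq (map_conj_invDFT_eq_self (V := Λ) fun k => by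
    simp [Λ, hdneg, diagonal_map])
  have hFU : 𝓕 (c U) = V := by simp only [c, hU, LinearEquiv.apply_symm_apply]
  have hFD : 𝓕 (c D) = Λ := by simp only [c, hD, LinearEquiv.apply_symm_apply]
  refine ⟨U, D, hc_dft_inj ?_, hc_dft_inj ?_, fun k i j hij => ?_, hc_dft_inj ?_, hc_dft_inj ?_⟩
  · ext1 k
    rw [hc_mul, hc_star, hc_one, dft_tMul, dft_tConjTranspose, hFU, dft_tOne]
    exact mem_unitaryGroup_iff.mp (hVunit k)
  · ext1 k
    rw [hc_mul, hc_star, hc_one, dft_tMul, dft_tConjTranspose, hFU, dft_tOne]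
    exact mem_unitaryGroup_iff'.mp (hVunit k)
  · have h := isDiag_invDFT (Φ := Λ) (fun k => isDiag_diagonal _) k hij
    rw [← hD] at h
    simpa using h
  · ext1 k
    rw [hc_star, dft_tConjTranspose, hFD]
    simp [Λ]
  · ext1 k
    rw [hc_mul, hc_mul, hc_star, dft_tMul, dft_tMul, dft_tConjTranspose, hFU, hFD]
    exact hAV k

end TEigendecomposition

theorem t_eigen_decomposition_general (n p : ℕ)
    (A : Fin p → Matrix (Fin n) (Fin n) ℝ) (hA : (bcirc A).IsSymm) :
    ∃ U D : Fin p → Matrix (Fin n) (Fin n) ℝ,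
      bcirc U * (bcirc U)ᵀ = 1 ∧ (bcirc U)ᵀ * bcirc U = 1 ∧
      (∀ k : Fin p, (D k).IsDiag) ∧
      (bcirc D).IsSymm ∧
      bcirc A = bcirc U * bcirc D * (bcirc U)ᵀ := by
  rcases p with _ | q
  · exact ⟨A, A, Subsingleton.elim _ _, Subsingleton.elim _ _, fun k => k.elim0,
      Subsingleton.elim _ _, Subsingleton.elim _ _⟩
  have hA' : tConjTranspose A = A := bcirc_injective (by rw [bcirc_tConjTranspose, hA.eq])
  -- `ZMod (q + 1)` is `Fin (q + 1)` by definition.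
  obtain ⟨U, D, hUU, hUU', hD, hDD, hAUD⟩ : ∃ U D : Fin (q + 1) → Matrix (Fin n) (Fin n) ℝ,
      tMul U (tConjTranspose U) = tOne ∧ tMul (tConjTranspose U) U = tOne ∧
      (∀ k, (D k).IsDiag) ∧ tConjTranspose D = D ∧ A = tMul (tMul U D) (tConjTranspose U) :=
    exists_tEigendecomposition (N := q + 1) hA'
  refine ⟨U, D, ?_, ?_, hD, ?_, ?_⟩
  · rw [← bcirc_tConjTranspose, ← bcirc_tMul, hUU, bcirc_tOne]
  · rw [← bcirc_tConjTranspose, ← bcirc_tMul, hUU', bcirc_tOne]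
  · rw [IsSymm, ← bcirc_tConjTranspose, hDD]
  · rw [← bcirc_tConjTranspose, ← bcirc_tMul, ← bcirc_tMul, ← hAUD]

/-- T-eigen-decomposition: every T-symmetric tensor `A` can be
written as `bcirc(A) = bcirc(U) · bcirc(D) · (bcirc U)ᵀ` with `bcirc(U)`
orthogonal, `D` f-diagonal and `bcirc(D)` symmetric. -/
theorem t_eigen_decomposition (n p : ℕ) (hp : 1 ≤ p)
    (A : Fin p → Matrix (Fin n) (Fin n) ℝ) (hA : (bcirc A).IsSymm) :
    ∃ U D : Fin p → Matrix (Fin n) (Fin n) ℝ,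
      bcirc U * (bcirc U)ᵀ = 1 ∧ (bcirc U)ᵀ * bcirc U = 1 ∧
      (∀ k : Fin p, (D k).IsDiag) ∧
      (bcirc D).IsSymm ∧
      bcirc A = bcirc U * bcirc D * (bcirc U)ᵀ :=
  t_eigen_decomposition_general n p A hA
end

section
/- Let A : Fin p → Matrix (Fin n) (Fin n) ℝ be T-symmetric with a T-eigen-decomposition bcirc(A) = bcirc(U) · bcirc(D) · (bcirc U)ᵀ, where bcirc(U) is orthogonal. Then bcirc(A) is invertible if and only if bcirc(D) is invertible, and in that case (bcirc A)⁻¹ = bcirc(U) · (bcirc D)⁻¹ · (bcirc U)ᵀ, and (bcirc A)⁻¹ is a symmetric matrix which is the block circulant matrix of some tensor (the T-inverse A^{-1} is again T-symmetric). -/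
open Matrix

/-!
Conjugating by an orthogonal matrix `U` preserves invertibility and commutes with inversion,
since `U⁻¹ = Uᵀ`. That the inverse of `bcirc A` is again block circulant comes from a
characterisation of block circulant matrices: they are exactly the matrices invariant under
simultaneously shifting the block indices of rows and columns by any `g : ℤ/p`, and this
invariance passes to the inverse because inversion commutes with simultaneous permutation.
-/

namespace Matrix

variable {ι R : Type*} [Fintype ι] [DecidableEq ι] [CommRing R] {U : Matrix ι ι R}

theorem isUnit_mul_mul_transpose_iff (hU : U * Uᵀ = 1) (D : Matrix ι ι R) :
    IsUnit (U * D * Uᵀ) ↔ IsUnit D :=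
  let u : (Matrix ι ι R)ˣ := ⟨U, Uᵀ, hU, mul_eq_one_comm.mp hU⟩
  (Units.isUnit_mul_units _ u⁻¹).trans (Units.isUnit_units_mul u D)

theorem inv_mul_mul_transpose (hU : U * Uᵀ = 1) (D : Matrix ι ι R) :
    (U * D * Uᵀ)⁻¹ = U * D⁻¹ * Uᵀ := by
  rw [Matrix.mul_inv_rev, Matrix.mul_inv_rev, inv_eq_left_inv hU, inv_eq_right_inv hU,
    Matrix.mul_assoc]

end Matrix

section BlockCirculant

variable {n p : ℕ} [NeZero p]

def blockShift (n : ℕ) (g : Fin p) : Fin p × Fin n ≃ Fin p × Fin n :=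
  (Equiv.addRight g).prodCongr (Equiv.refl (Fin n))

theorem bcirc_submatrix_blockShift (A : Fin p → Matrix (Fin n) (Fin n) ℝ) (g : Fin p) :
    (bcirc A).submatrix (blockShift n g) (blockShift n g) = bcirc A := by
  ext ⟨k, i⟩ ⟨l, j⟩
  simp [bcirc, blockShift]

theorem exists_bcirc_eq_of_submatrix_blockShift {M : Matrix (Fin p × Fin n) (Fin p × Fin n) ℝ}
    (hM : ∀ g, M.submatrix (blockShift n g) (blockShift n g) = M) :
    ∃ C : Fin p → Matrix (Fin n) (Fin n) ℝ, M = bcirc C := by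
  refine ⟨fun g => Matrix.of fun i j => M (g, i) (0, j), ?_⟩
  ext ⟨k, i⟩ ⟨l, j⟩
  have := congr_fun₂ (hM l) (k - l, i) (0, j)
  simp only [submatrix_apply, blockShift, Equiv.prodCongr_apply, Equiv.coe_addRight,
    Equiv.coe_refl, Prod.map, id, sub_add_cancel, zero_add] at this
  simp [bcirc, this]

theorem exists_bcirc_eq_inv_bcirc (A : Fin p → Matrix (Fin n) (Fin n) ℝ) :
    ∃ C : Fin p → Matrix (Fin n) (Fin n) ℝ, (bcirc A)⁻¹ = bcirc C :=
  exists_bcirc_eq_of_submatrix_blockShift fun g => by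
    rw [← inv_submatrix_equiv, bcirc_submatrix_blockShift]

end BlockCirculant

theorem t_inverse_symmetric_general (n p : ℕ) (hp : 1 ≤ p)
    (A U D : Fin p → Matrix (Fin n) (Fin n) ℝ)
    (hA : (bcirc A).IsSymm)
    (hU1 : bcirc U * (bcirc U)ᵀ = 1)
    (hdec : bcirc A = bcirc U * bcirc D * (bcirc U)ᵀ) :
    (IsUnit (bcirc A) ↔ IsUnit (bcirc D)) ∧
    (IsUnit (bcirc A) →
      (bcirc A)⁻¹ = bcirc U * (bcirc D)⁻¹ * (bcirc U)ᵀ ∧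
      ((bcirc A)⁻¹).IsSymm ∧
      ∃ C : Fin p → Matrix (Fin n) (Fin n) ℝ, (bcirc A)⁻¹ = bcirc C) := by
  have : NeZero p := ⟨by omega⟩
  have hinv : (bcirc A)⁻¹ = bcirc U * (bcirc D)⁻¹ * (bcirc U)ᵀ := by
    rw [hdec, inv_mul_mul_transpose hU1]
  exact ⟨hdec ▸ isUnit_mul_mul_transpose_iff hU1 _,
    fun _ => ⟨hinv, hA.inv, exists_bcirc_eq_inv_bcirc A⟩⟩

/-- if `A` is T-symmetric with T-eigen-decomposition
`bcirc(A) = bcirc(U)·bcirc(D)·(bcirc U)ᵀ`, then `bcirc(A)` is invertible iff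
`bcirc(D)` is, and in that case
`(bcirc A)⁻¹ = bcirc(U)·(bcirc D)⁻¹·(bcirc U)ᵀ`, `(bcirc A)⁻¹` is symmetric
and equals the block circulant matrix of some tensor. -/
theorem t_inverse_symmetric (n p : ℕ) (hp : 1 ≤ p)
    (A U D : Fin p → Matrix (Fin n) (Fin n) ℝ)
    (hA : (bcirc A).IsSymm)
    (hU1 : bcirc U * (bcirc U)ᵀ = 1) (hU2 : (bcirc U)ᵀ * bcirc U = 1)
    (hdec : bcirc A = bcirc U * bcirc D * (bcirc U)ᵀ) :
    (IsUnit (bcirc A) ↔ IsUnit (bcirc D)) ∧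
    (IsUnit (bcirc A) →
      (bcirc A)⁻¹ = bcirc U * (bcirc D)⁻¹ * (bcirc U)ᵀ ∧
      ((bcirc A)⁻¹).IsSymm ∧
      ∃ C : Fin p → Matrix (Fin n) (Fin n) ℝ, (bcirc A)⁻¹ = bcirc C) :=
  t_inverse_symmetric_general n p hp A U D hA hU1 hdec
end

section
/- Let A : Fin p → Matrix (Fin n) (Fin n) ℝ, d : Fin p → ℝ, and X : Matrix (Fin n) (Fin p) ℝ. If bcirc(A) ·ᵥ vec(X) = vec(X · circ(d)), then for every k ∈ Fin p the cyclic column shift X^{[k]} also satisfies bcirc(A) ·ᵥ vec(X^{[k]}) = vec(X^{[k]} · circ(d)); i.e., every cyclic column shift of an eigenmatrix of A is again an eigenmatrix of A associated with the same eigentuple d. -/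
open Matrix

/-- The vectorization of an `n × p` matrix: `vec(X) (l,i) = X i l`. -/
def tvec {n p : ℕ} (X : Matrix (Fin n) (Fin p) ℝ) : Fin p × Fin n → ℝ :=
  fun li => X li.2 li.1

/-- The `k`-th cyclic column shift `X^{[k]} i l = X i (l − k)`. -/
def cshift {n p : ℕ} (X : Matrix (Fin n) (Fin p) ℝ) (k : Fin p) :
    Matrix (Fin n) (Fin p) ℝ :=
  Matrix.of fun i l => X i (l - k)

/-- every cyclic column shift of an eigenmatrix of `A` is again
an eigenmatrix of `A` associated with the same eigentuple `d`. -/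
theorem cshift_eigenmatrix (n p : ℕ) (hp : 1 ≤ p)
    (A : Fin p → Matrix (Fin n) (Fin n) ℝ) (d : Fin p → ℝ)
    (X : Matrix (Fin n) (Fin p) ℝ)
    (h : bcirc A *ᵥ tvec X = tvec (X * Matrix.circulant d)) (k : Fin p) :
    bcirc A *ᵥ tvec (cshift X k) = tvec (cshift X k * Matrix.circulant d) := by
  haveI : NeZero p := ⟨by omega⟩
  funext li
  obtain ⟨l, i⟩ := li
  have hh := congrFun h (l - k, i)
  simp only [mulVec, dotProduct, tvec, bcirc, cshift, Matrix.mul_apply,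
    Matrix.circulant_apply, Matrix.of_apply] at hh ⊢
  have hL : (∑ x : Fin p × Fin n, A (l - x.1) i x.2 * X x.2 (x.1 - k)) =
      ∑ x : Fin p × Fin n, A (l - k - x.1) i x.2 * X x.2 x.1 := by
    apply Fintype.sum_equiv ((Equiv.subRight k).prodCongr (Equiv.refl (Fin n)))
    intro x
    simp [sub_sub_sub_cancel_right]
  have hR : (∑ s : Fin p, X i (s - k) * d (s - l)) =
      ∑ s : Fin p, X i s * d (s - (l - k)) := by
    apply Fintype.sum_equiv (Equiv.subRight k)
    intro s
    simp [sub_sub_sub_cancel_right]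
  rw [hL, hR, hh]
end

section
/- Let A : Fin p → Matrix (Fin n) (Fin n) ℝ, d : Fin p → ℝ, λ : ℝ, and X : Matrix (Fin n) (Fin p) ℝ with bcirc(A) ·ᵥ vec(X) = vec(X · circ(d)). Define A' : Fin p → Matrix (Fin n) (Fin n) ℝ by A' 0 = A 0 + λ • (1 : Matrix (Fin n) (Fin n) ℝ) and A' k = A k for k ≠ 0 (the tensor A + λ·I). Then bcirc(A') ·ᵥ vec(X) = vec(X · circ(d + λ • e)); i.e., if d is an eigentuple of A with eigenmatrix X, then d + λe is an eigentuple of A + λI with the same eigenmatrix X. -/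
open Matrix

/-- The real identity tube `e` with `e 0 = 1` and `e k = 0` for `k ≠ 0`. -/
def tubeE (p : ℕ) : Fin p → ℝ := fun k => if (k : ℕ) = 0 then 1 else 0

lemma bcirc_shift {n p : ℕ} [NeZero p] (A : Fin p → Matrix (Fin n) (Fin n) ℝ) (lam : ℝ) :
    bcirc (fun k => if (k : ℕ) = 0 then A k + lam • (1 : Matrix (Fin n) (Fin n) ℝ) else A k)
      = bcirc A + lam • (1 : Matrix (Fin p × Fin n) (Fin p × Fin n) ℝ) := by
  ext ⟨k, i⟩ ⟨l, j⟩
  simp only [bcirc, Matrix.of_apply, Matrix.add_apply, Matrix.smul_apply, Matrix.one_apply,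
    Prod.mk.injEq]
  by_cases hkl : k = l
  · have h0 : ((k - l : Fin p) : ℕ) = 0 := by simp [hkl]
    simp only [h0, if_true, hkl, true_and, Matrix.add_apply, Matrix.smul_apply,
      Matrix.one_apply, smul_eq_mul]
    by_cases hij : i = j <;> simp [hij]
  · have h0 : ((k - l : Fin p) : ℕ) ≠ 0 := by
      intro hc
      apply hkl
      have : (k - l : Fin p) = 0 := Fin.ext (by simpa using hc)
      exact sub_eq_zero.mp this
    simp [h0, hkl]

lemma circulant_shift {p : ℕ} [NeZero p] (d : Fin p → ℝ) (lam : ℝ) :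
    Matrix.circulant (d + lam • tubeE p)
      = Matrix.circulant d + lam • (1 : Matrix (Fin p) (Fin p) ℝ) := by
  ext i j
  simp only [Matrix.circulant_apply, Pi.add_apply, Pi.smul_apply, tubeE, smul_eq_mul,
    Matrix.add_apply, Matrix.smul_apply, Matrix.one_apply]
  by_cases hij : i = j
  · simp [hij]
  · have h0 : ((i - j : Fin p) : ℕ) ≠ 0 := by
      intro hc
      apply hij
      have : (i - j : Fin p) = 0 := Fin.ext (by simpa using hc)
      exact sub_eq_zero.mp this
    simp [h0, hij]

/-- if `d` is an eigentuple of `A` with eigenmatrix `X`, then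
`d + λe` is an eigentuple of `A + λI` with the same eigenmatrix `X`. -/
theorem eigentuple_shift_identity (n p : ℕ) (hp : 1 ≤ p)
    (A : Fin p → Matrix (Fin n) (Fin n) ℝ) (d : Fin p → ℝ) (lam : ℝ)
    (X : Matrix (Fin n) (Fin p) ℝ)
    (h : bcirc A *ᵥ tvec X = tvec (X * Matrix.circulant d)) :
    bcirc (fun k => if (k : ℕ) = 0 then A k + lam • (1 : Matrix (Fin n) (Fin n) ℝ) else A k)
        *ᵥ tvec X
      = tvec (X * Matrix.circulant (d + lam • tubeE p)) := by
  haveI : NeZero p := ⟨by omega⟩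
  rw [bcirc_shift, circulant_shift, Matrix.add_mulVec, Matrix.smul_mulVec,
    Matrix.one_mulVec, Matrix.mul_add, Matrix.mul_smul, Matrix.mul_one, h]
  funext ⟨l, i⟩
  simp [tvec]
end

section
/- Let A : Fin p → Matrix (Fin n) (Fin n) ℝ, d : Fin p → ℝ, and U : Matrix (Fin n) (Fin p) ℝ be such that bcirc(A) ·ᵥ vec(U) = vec(U · circ(d)) and the cyclic column shifts of U are orthonormal, i.e., ⟪vec(U^{[k]}), vec(U)⟫ = 1 if k = 0 and = 0 if k ≠ 0. Then the value of the T-quadratic form at U is the eigentuple up to index reversal: F_A(U) k = d (−k) for every k ∈ Fin p (index arithmetic in ℤ/p). -/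
open Matrix

/-- The T-quadratic form of a T-square tensor `A` at `X`:
`F_A(X) k = ∑_{l,l'} ∑_{i,j} X i (l−k) * (A (l−l')) i j * X j l'`. -/
def tquad {n p : ℕ} (A : Fin p → Matrix (Fin n) (Fin n) ℝ)
    (X : Matrix (Fin n) (Fin p) ℝ) : Fin p → ℝ :=
  fun k => ∑ l : Fin p, ∑ l' : Fin p, ∑ i : Fin n, ∑ j : Fin n,
    X i (l - k) * A (l - l') i j * X j l'

/-- if `U` is an eigenmatrix of `A` for the eigentuple `d` whose
cyclic column shifts are orthonormal, then the T-quadratic form at `U` is the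
eigentuple up to index reversal: `F_A(U) k = d (−k)`. -/
theorem tquad_at_orthonormal_eigenmatrix (n p : ℕ) (hp : 1 ≤ p)
    (A : Fin p → Matrix (Fin n) (Fin n) ℝ) (d : Fin p → ℝ)
    (U : Matrix (Fin n) (Fin p) ℝ)
    (heig : bcirc A *ᵥ tvec U = tvec (U * Matrix.circulant d))
    (horth : ∀ k : Fin p,
      tvec (cshift U k) ⬝ᵥ tvec U = if (k : ℕ) = 0 then 1 else 0) :
    ∀ k : Fin p, tquad A U k = d (-k) := by

  haveI : NeZero p := ⟨by omega⟩
  intro k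
  have key : ∀ l : Fin p, ∀ i : Fin n,
      (∑ l' : Fin p, ∑ j : Fin n, A (l - l') i j * U j l')
        = ∑ m : Fin p, U i m * d (m - l) := by
    intro l i
    have h := congrFun heig (l, i)
    simpa [Matrix.mulVec, dotProduct, bcirc, tvec, Matrix.mul_apply,
      Matrix.circulant_apply, Fintype.sum_prod_type] using h
  have horth' : ∀ s : Fin p,
      (∑ l : Fin p, ∑ i : Fin n, U i (l - s) * U i l)
        = if (s : ℕ) = 0 then 1 else 0 := by
    intro s
    have h := horth s
    simpa [dotProduct, tvec, cshift, Fintype.sum_prod_type] using h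
  calc tquad A U k
      = ∑ l : Fin p, ∑ i : Fin n, U i (l - k) *
          (∑ l' : Fin p, ∑ j : Fin n, A (l - l') i j * U j l') := by
        unfold tquad
        refine Finset.sum_congr rfl fun l _ => ?_
        rw [Finset.sum_comm]
        simp [Finset.mul_sum, mul_assoc]
    _ = ∑ l : Fin p, ∑ i : Fin n, U i (l - k) * ∑ m : Fin p, U i m * d (m - l) := by
        refine Finset.sum_congr rfl fun l _ => Finset.sum_congr rfl fun i _ => ?_
        rw [key l i]
    _ = ∑ l : Fin p, ∑ m : Fin p, d (m - l) * ∑ i : Fin n, U i (l - k) * U i m := by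
        refine Finset.sum_congr rfl fun l _ => ?_
        simp only [Finset.mul_sum]
        rw [Finset.sum_comm]
        refine Finset.sum_congr rfl fun m _ => Finset.sum_congr rfl fun i _ => ?_
        ring
    _ = ∑ m : Fin p, ∑ l : Fin p, d (m - l) * ∑ i : Fin n, U i (l - k) * U i m :=
        Finset.sum_comm
    _ = ∑ m : Fin p, ∑ s : Fin p, d s * ∑ i : Fin n, U i (m - s - k) * U i m := by
        refine Finset.sum_congr rfl fun m _ => ?_
        refine (Fintype.sum_equiv (Equiv.subLeft m) _ _ fun s => ?_).symm
        simp [Equiv.subLeft]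
    _ = ∑ s : Fin p, d s * ∑ m : Fin p, ∑ i : Fin n, U i (m - (s + k)) * U i m := by
        rw [Finset.sum_comm]
        simp [Finset.mul_sum, sub_sub]
    _ = ∑ s : Fin p, d s * (if ((s + k : Fin p) : ℕ) = 0 then 1 else 0) := by
        refine Finset.sum_congr rfl fun s _ => ?_
        rw [horth' (s + k)]
    _ = d (-k) := by
        have hz : ∀ s : Fin p, ((s : ℕ) = 0) ↔ s = 0 := fun s => by
          rw [← Fin.val_zero p, Fin.val_inj]
        simp only [hz, add_eq_zero_iff_eq_neg, mul_ite, mul_one, mul_zero]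
        simp
end

section
/- Let A : Fin p → Matrix (Fin m) (Fin n) ℝ admit a T-singular value decomposition: bcirc(A) = bcirc(U) · bcirc(S) · (bcirc V)ᵀ, where U : Fin p → Matrix (Fin m) (Fin m) ℝ and V : Fin p → Matrix (Fin n) (Fin n) ℝ have orthogonal block circulant matrices and S : Fin p → Matrix (Fin m) (Fin n) ℝ is f-diagonal. Then bcirc(A) · (bcirc A)ᵀ = bcirc(U) · (bcirc(S) · (bcirc S)ᵀ) · (bcirc U)ᵀ and (bcirc A)ᵀ · bcirc(A) = bcirc(V) · ((bcirc S)ᵀ · bcirc(S)) · (bcirc V)ᵀ; moreover bcirc(A) · (bcirc A)ᵀ and (bcirc A)ᵀ · bcirc(A) are symmetric positive semidefinite matrices, and there exist f-diagonal tensors C : Fin p → Matrix (Fin m) (Fin m) ℝ and C' : Fin p → Matrix (Fin n) (Fin n) ℝ with bcirc(C) = bcirc(S) · (bcirc S)ᵀ and bcirc(C') = (bcirc S)ᵀ · bcirc(S) (so these factorizations are T-eigen-decompositions of the T-symmetric tensors A*Aᵀ and Aᵀ*A). -/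
open Matrix

/-- if `A` has a TSVD `bcirc(A) = bcirc(U)·bcirc(S)·(bcirc V)ᵀ`,
then `A·Aᵀ` and `Aᵀ·A` are T-symmetric positive semidefinite with
T-eigen-decompositions built from `U`, `V` and `S·Sᵀ`, `Sᵀ·S`. -/
theorem tsvd_gram_decompositions (m n p : ℕ) (hp : 1 ≤ p)
    (A : Fin p → Matrix (Fin m) (Fin n) ℝ)
    (U : Fin p → Matrix (Fin m) (Fin m) ℝ)
    (V : Fin p → Matrix (Fin n) (Fin n) ℝ)
    (S : Fin p → Matrix (Fin m) (Fin n) ℝ)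
    (hU1 : bcirc U * (bcirc U)ᵀ = 1) (hU2 : (bcirc U)ᵀ * bcirc U = 1)
    (hV1 : bcirc V * (bcirc V)ᵀ = 1) (hV2 : (bcirc V)ᵀ * bcirc V = 1)
    (hS : ∀ (k : Fin p) (i : Fin m) (j : Fin n), (i : ℕ) ≠ (j : ℕ) → S k i j = 0)
    (hdec : bcirc A = bcirc U * bcirc S * (bcirc V)ᵀ) :
    bcirc A * (bcirc A)ᵀ = bcirc U * (bcirc S * (bcirc S)ᵀ) * (bcirc U)ᵀ ∧
    (bcirc A)ᵀ * bcirc A = bcirc V * ((bcirc S)ᵀ * bcirc S) * (bcirc V)ᵀ ∧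
    (bcirc A * (bcirc A)ᵀ).PosSemidef ∧
    ((bcirc A)ᵀ * bcirc A).PosSemidef ∧
    (∃ C : Fin p → Matrix (Fin m) (Fin m) ℝ,
      (∀ k : Fin p, (C k).IsDiag) ∧ bcirc C = bcirc S * (bcirc S)ᵀ) ∧
    (∃ C' : Fin p → Matrix (Fin n) (Fin n) ℝ,
      (∀ k : Fin p, (C' k).IsDiag) ∧ bcirc C' = (bcirc S)ᵀ * bcirc S) := by
  haveI : NeZero p := ⟨by omega⟩
  have hVc : ∀ X : Matrix (Fin p × Fin n) (Fin p × Fin m) ℝ,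
      (bcirc V)ᵀ * (bcirc V * X) = X := fun X => by rw [← Matrix.mul_assoc, hV2, Matrix.one_mul]
  have hUc : ∀ X : Matrix (Fin p × Fin m) (Fin p × Fin n) ℝ,
      (bcirc U)ᵀ * (bcirc U * X) = X := fun X => by rw [← Matrix.mul_assoc, hU2, Matrix.one_mul]
  refine ⟨?_, ?_, ?_, ?_, ?_, ?_⟩
  · rw [hdec]
    simp only [transpose_mul, transpose_transpose, Matrix.mul_assoc]
    rw [hVc]
  · rw [hdec]
    simp only [transpose_mul, transpose_transpose, Matrix.mul_assoc]
    rw [hUc]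
  · have h := Matrix.posSemidef_self_mul_conjTranspose (bcirc A)
    simpa using h
  · have h := Matrix.posSemidef_conjTranspose_mul_self (bcirc A)
    simpa using h
  · refine ⟨fun t => ∑ q, S (t + q) * (S q)ᵀ, ?_, ?_⟩
    · intro k i j hij
      simp only [Matrix.sum_apply, Matrix.mul_apply, Matrix.transpose_apply]
      refine Finset.sum_eq_zero fun q _ => Finset.sum_eq_zero fun r _ => ?_
      rcases eq_or_ne (i : ℕ) (r : ℕ) with h | h
      · have hjr : (j : ℕ) ≠ (r : ℕ) := fun hr => hij (Fin.ext (h.trans hr.symm))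
        rw [hS _ _ _ hjr, mul_zero]
      · rw [hS _ _ _ h, zero_mul]
    · ext ⟨k, i⟩ ⟨l, j⟩
      simp only [bcirc, Matrix.of_apply, Matrix.mul_apply, Matrix.sum_apply,
        Matrix.transpose_apply, Fintype.sum_prod_type]
      calc ∑ q, ∑ r, S (k - l + q) i r * S q j r
          = ∑ q, ∑ r, S (k - (l - q)) i r * S (l - (l - q)) j r := by
            refine Finset.sum_congr rfl fun q _ => ?_
            have h1 : k - l + q = k - (l - q) := by abel
            have h2 : l - (l - q) = q := sub_sub_cancel l q
            rw [h1, h2]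
        _ = ∑ q, ∑ r, S (k - q) i r * S (l - q) j r :=
            Fintype.sum_equiv (Equiv.subLeft l) _ _ (fun q => rfl)
  · refine ⟨fun t => ∑ q, (S q)ᵀ * S (q + t), ?_, ?_⟩
    · intro k i j hij
      simp only [Matrix.sum_apply, Matrix.mul_apply, Matrix.transpose_apply]
      refine Finset.sum_eq_zero fun q _ => Finset.sum_eq_zero fun r _ => ?_
      rcases eq_or_ne (r : ℕ) (i : ℕ) with h | h
      · have hrj : (r : ℕ) ≠ (j : ℕ) := fun hr => hij (Fin.ext (h.symm.trans hr))
        rw [hS _ _ _ hrj, mul_zero]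
      · rw [hS _ _ _ h, zero_mul]
    · ext ⟨k, i⟩ ⟨l, j⟩
      simp only [bcirc, Matrix.of_apply, Matrix.mul_apply, Matrix.sum_apply,
        Matrix.transpose_apply, Fintype.sum_prod_type]
      calc ∑ q, ∑ r, S q r i * S (q + (k - l)) r j
          = ∑ q, ∑ r, S (q + k - k) r i * S (q + k - l) r j := by
            refine Finset.sum_congr rfl fun q _ => ?_
            have h1 : q = q + k - k := by abel
            have h2 : q + (k - l) = q + k - l := by abel
            rw [← h1, h2]
        _ = ∑ q, ∑ r, S (q - k) r i * S (q - l) r j :=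
            Fintype.sum_equiv (Equiv.addRight k) _ _ (fun q => rfl)
end
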